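/- Let R be a commutative ring, I an ideal of R, M an R-module, P a submodule of M, and F a faithfully flat R-module. Then P is an I-primary submodule of M if and only if F ⊗ P (identified with its image in F ⊗ M) is an I-primary submodule of the R-module F ⊗ M. -/

import Mathlib

open TensorProduct

/-!
For `r ∉ √(P : M)`, the `I`-primary condition says that `P.comap (r • id) = {m | r • m ∈ P}` is
covered by `P` and `(I • P).comap (r • id)`, hence (a submodule covered by two submodules lies in
one of them) is contained in one of the two. Over a flat `F`, the functor `N ↦ F ⊗ N` commutes
with `comap (r • id)` and with `I • -`, and sends `⊤` to `⊤`; over a faithfully flat `F` it also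
reflects inclusions, so it preserves `(P : M)` and `P ≠ ⊤`. Hence both sides of the equivalence
are the same condition.
-/

/-- `P` is an `I`-primary submodule of `M`. -/
def IsIPrimary {R : Type*} [CommRing R] {M : Type*} [AddCommGroup M] [Module R M]
    (I : Ideal R) (P : Submodule R M) : Prop :=
  P ≠ ⊤ ∧ ∀ r : R, ∀ m : M, r • m ∈ P → r • m ∉ I • P →
    m ∈ P ∨ r ∈ (P.colon ⊤).radical

/-- The image of `F ⊗ N` in `F ⊗ M`, under the map induced by the inclusion `N → M`. -/
noncomputable def tensorImage {R : Type*} [CommRing R] {M : Type*} [AddCommGroup M] [Module R M]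
    (F : Type*) [AddCommGroup F] [Module R F] (N : Submodule R M) :
    Submodule R (F ⊗[R] M) :=
  LinearMap.range (LinearMap.lTensor F N.subtype)

section

variable {R : Type*} [CommRing R] {M : Type*} [AddCommGroup M] [Module R M]

theorem isIPrimary_iff_comap_le_or_comap_le (I : Ideal R) (P : Submodule R M) :
    IsIPrimary I P ↔ P ≠ ⊤ ∧ ∀ r ∉ (P.colon ⊤).radical,
      P.comap (r • LinearMap.id) ≤ P ∨
        P.comap (r • LinearMap.id) ≤ (I • P).comap (r • LinearMap.id) := by
  refine and_congr_right fun _ => ⟨fun h r hr => ?_, fun h r m hmem hnmem => ?_⟩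
  · refine AddSubgroupClass.subset_union.1 fun m hm => ?_
    by_cases hI : r • m ∈ I • P
    · exact Or.inr hI
    · exact Or.inl ((h r m hm hI).resolve_right hr)
  · by_cases hr : r ∈ (P.colon ⊤).radical
    · exact Or.inr hr
    · rcases h r hr with hle | hle
      · exact Or.inl (hle hmem)
      · exact absurd (hle hmem) hnmem

theorem mem_colon_top_iff_top_le_comap (N : Submodule R M) (r : R) :
    r ∈ N.colon ⊤ ↔ ⊤ ≤ N.comap (r • LinearMap.id) := by
  simp [Submodule.mem_colon, SetLike.le_def]

variable (F : Type*) [AddCommGroup F] [Module R F]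

theorem tensorImage_eq_map₂ (N : Submodule R M) :
    tensorImage F N = Submodule.map₂ (TensorProduct.mk R F M) ⊤ N := by
  rw [tensorImage, LinearMap.lTensor, TensorProduct.range_map, LinearMap.range_id,
    Submodule.range_subtype]

theorem tensorImage_top : tensorImage F (⊤ : Submodule R M) = ⊤ := by
  rw [tensorImage_eq_map₂, TensorProduct.map₂_mk_top_top_eq_top]

theorem tensorImage_smul (I : Ideal R) (N : Submodule R M) :
    tensorImage F (I • N) = I • tensorImage F N := by
  simp only [tensorImage_eq_map₂]
  apply le_antisymm
  · refine Submodule.map₂_le.2 fun f _ x hx => ?_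
    refine Submodule.smul_induction_on hx (fun r hr n hn => ?_) fun _ _ ha hb => ?_
    · rw [mk_apply, tmul_smul]
      exact Submodule.smul_mem_smul hr (Submodule.apply_mem_map₂ _ Submodule.mem_top hn)
    · rw [map_add]
      exact add_mem ha hb
  · refine Submodule.smul_le.2 fun r hr z hz => ?_
    have hle : Submodule.map₂ (TensorProduct.mk R F M) ⊤ N ≤
        (Submodule.map₂ (TensorProduct.mk R F M) ⊤ (I • N)).comap (r • LinearMap.id) :=
      Submodule.map₂_le.2 fun f _ n hn => by
        simpa [← tmul_smul] using
          Submodule.apply_mem_map₂ (TensorProduct.mk R F M) Submodule.mem_top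
            (Submodule.smul_mem_smul hr hn)
    exact hle hz

section Flat

variable [Module.Flat R F]

theorem tensorImage_ker {X : Type*} [AddCommGroup X] [Module R X] (g : M →ₗ[R] X) :
    tensorImage F (LinearMap.ker g) = LinearMap.ker (LinearMap.lTensor F g) :=
  ((LinearMap.exact_iff).1
    (Module.Flat.lTensor_exact F (LinearMap.exact_subtype_ker_map g))).symm

theorem tensorImage_comap {M' : Type*} [AddCommGroup M'] [Module R M'] (f : M →ₗ[R] M')
    (N : Submodule R M') :
    tensorImage F (N.comap f) = (tensorImage F N).comap (LinearMap.lTensor F f) := by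
  rw [← N.ker_mkQ, ← LinearMap.ker_comp, tensorImage_ker, LinearMap.lTensor_comp,
    LinearMap.ker_comp, tensorImage_ker]

theorem tensorImage_comap_smul (N : Submodule R M) (r : R) :
    tensorImage F (N.comap (r • LinearMap.id)) = (tensorImage F N).comap (r • LinearMap.id) := by
  rw [tensorImage_comap, LinearMap.lTensor_smul, LinearMap.lTensor_id]

end Flat

variable [Module.FaithfullyFlat R F]

theorem tensorImage_le_tensorImage_iff {N N' : Submodule R M} :
    tensorImage F N ≤ tensorImage F N' ↔ N ≤ N' := by
  rw [tensorImage, tensorImage, ← lTensor_mkQ F N', LinearMap.range_le_ker_iff,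
    ← LinearMap.lTensor_comp, ← Module.FaithfullyFlat.zero_iff_lTensor_zero,
    ← LinearMap.range_le_ker_iff, Submodule.range_subtype, Submodule.ker_mkQ]

theorem tensorImage_eq_top_iff {N : Submodule R M} : tensorImage F N = ⊤ ↔ N = ⊤ := by
  rw [← top_le_iff, ← tensorImage_top, tensorImage_le_tensorImage_iff, top_le_iff]

theorem colon_tensorImage (N : Submodule R M) :
    (tensorImage F N).colon ⊤ = N.colon ⊤ := by
  ext r
  rw [mem_colon_top_iff_top_le_comap, mem_colon_top_iff_top_le_comap, ← tensorImage_top,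
    ← tensorImage_comap_smul, tensorImage_le_tensorImage_iff]

end

theorem stmt18 {R : Type*} [CommRing R] {M : Type*} [AddCommGroup M] [Module R M]
    (F : Type*) [AddCommGroup F] [Module R F] [Module.FaithfullyFlat R F]
    (I : Ideal R) (P : Submodule R M) :
    IsIPrimary I P ↔ IsIPrimary I (tensorImage F P) := by
  simp only [isIPrimary_iff_comap_le_or_comap_le, ne_eq, tensorImage_eq_top_iff,
    colon_tensorImage, ← tensorImage_smul, ← tensorImage_comap_smul,
    tensorImage_le_tensorImage_iff]
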